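/- arXiv:2604.15004 — 9 statements merged into one kernel-verified Lean document; each statement's English description precedes it below -/
import Mathlib

section
/- In exact policy iteration for a finite-horizon deterministic problem, the policies are monotonically improving: for every iteration index ℓ, every stage k, and every state x_k, the cost-to-go satisfies J_{k,π^{ℓ+1}}(x_k) ≤ J_{k,π^ℓ}(x_k). -/
open Finset

theorem exact_policy_iteration_monotone_improvement
    {S C : Type} [Fintype S] (N : ℕ)
    (U : ℕ → S → Finset C) (hU : ∀ k x, (U k x).Nonempty)
    (f : ℕ → S → C → S) (g : ℕ → S → C → ℝ) (gN : S → ℝ)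
    (π : ℕ → ℕ → S → C) (J : ℕ → ℕ → S → ℝ)
    (hpol : ∀ ℓ k x, π ℓ k x ∈ U k x)
    (hJN : ∀ ℓ x, J ℓ N x = gN x)
    (hJrec : ∀ ℓ k, k < N → ∀ x,
      J ℓ k x = g k x (π ℓ k x) + J ℓ (k + 1) (f k x (π ℓ k x)))
    (hgreedy : ∀ ℓ k, k < N → ∀ x, ∀ u ∈ U k x,
      g k x (π (ℓ + 1) k x) + J ℓ (k + 1) (f k x (π (ℓ + 1) k x)) ≤
        g k x u + J ℓ (k + 1) (f k x u)) :
    ∀ ℓ k, k ≤ N → ∀ x, J (ℓ + 1) k x ≤ J ℓ k x := by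
  intro ℓ
  suffices h : ∀ d k, k ≤ N → N - k = d → ∀ x, J (ℓ + 1) k x ≤ J ℓ k x by
    intro k hk x; exact h (N - k) k hk rfl x
  intro d
  induction d with
  | zero =>
    intro k hk hd x
    have hkN : k = N := by omega
    subst hkN
    rw [hJN, hJN]
  | succ d ih =>
    intro k hk hd x
    have hkN : k < N := by omega
    have h1 : J (ℓ + 1) (k + 1) (f k x (π (ℓ + 1) k x)) ≤
        J ℓ (k + 1) (f k x (π (ℓ + 1) k x)) :=
      ih (k + 1) (by omega) (by omega) _
    have h2 := hgreedy ℓ k hkN x (π ℓ k x) (hpol ℓ k x)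
    rw [hJrec (ℓ + 1) k hkN x, hJrec ℓ k hkN x]
    linarith
end

section
/- Exact policy iteration for an N-stage finite-horizon deterministic problem terminates in at most N iterations: starting from any policy π^0, the policy π^N obtained after N policy iteration steps satisfies J_{k,π^N} = J*_k for all stages k; in particular J_{π^N}(x_0) = J*(x_0) for all x_0. -/
open Finset

theorem exact_policy_iteration_terminates_in_N_steps
    {S C : Type} [Fintype S] (N : ℕ)
    (U : ℕ → S → Finset C) (hU : ∀ k x, (U k x).Nonempty)
    (f : ℕ → S → C → S) (g : ℕ → S → C → ℝ) (gN : S → ℝ)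
    (Jstar : ℕ → S → ℝ)
    (hJsN : ∀ x, Jstar N x = gN x)
    (hJsk : ∀ k, k < N → ∀ x,
      Jstar k x = (U k x).inf' (hU k x) (fun u => g k x u + Jstar (k + 1) (f k x u)))
    (π : ℕ → ℕ → S → C) (J : ℕ → ℕ → S → ℝ)
    (hpol : ∀ ℓ k x, π ℓ k x ∈ U k x)
    (hJN : ∀ ℓ x, J ℓ N x = gN x)
    (hJrec : ∀ ℓ k, k < N → ∀ x,
      J ℓ k x = g k x (π ℓ k x) + J ℓ (k + 1) (f k x (π ℓ k x)))
    (hgreedy : ∀ ℓ k, k < N → ∀ x, ∀ u ∈ U k x,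
      g k x (π (ℓ + 1) k x) + J ℓ (k + 1) (f k x (π (ℓ + 1) k x)) ≤
        g k x u + J ℓ (k + 1) (f k x u)) :
    (∀ k, k ≤ N → ∀ x, J N k x = Jstar k x) ∧ (∀ x0 : S, J N 0 x0 = Jstar 0 x0) := by
  have main : ∀ ℓ, ∀ k x, N - ℓ ≤ k → k ≤ N → J ℓ k x = Jstar k x := by
    intro ℓ
    induction ℓ with
    | zero =>
      intro k x h1 h2
      have hk : k = N := le_antisymm h2 (by simpa using h1)
      subst hk
      rw [hJN, hJsN]
    | succ ℓ IH =>
      -- inner backward induction on k via d = N - k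
      have inner : ∀ d k x, N - k = d → N - (ℓ + 1) ≤ k → k ≤ N →
          J (ℓ + 1) k x = Jstar k x := by
        intro d
        induction d with
        | zero =>
          intro k x hd _ h2
          have hk : k = N := le_antisymm h2 (Nat.le_of_sub_eq_zero hd)
          subst hk
          rw [hJN, hJsN]
        | succ d ihd =>
          intro k x hd h1 h2
          have hkN : k < N := by omega
          have hnext : ∀ y, J (ℓ + 1) (k + 1) y = Jstar (k + 1) y := by
            intro y
            exact ihd (k + 1) y (by omega) (by omega) (by omega)
          have hIHnext : ∀ y, J ℓ (k + 1) y = Jstar (k + 1) y := by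
            intro y
            exact IH (k + 1) y (by omega) (by omega)
          have ha : J (ℓ + 1) k x
              = g k x (π (ℓ + 1) k x) + Jstar (k + 1) (f k x (π (ℓ + 1) k x)) := by
            rw [hJrec (ℓ + 1) k hkN x, hnext]
          rw [ha, hJsk k hkN x]
          apply le_antisymm
          · apply Finset.le_inf'
            intro u hu
            have := hgreedy ℓ k hkN x u hu
            rw [hIHnext, hIHnext] at this
            exact this
          · exact Finset.inf'_le _ (hpol (ℓ + 1) k x)
      intro k x h1 h2
      exact inner (N - k) k x rfl h1 h2
  refine ⟨fun k hk x => main N k x (by omega) hk, fun x0 => main N 0 x0 (by omega) (by omega)⟩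
end

section
/- Consider the on-line policy iteration algorithm with a consistent generator: given policy π^ℓ, controls u_k^{ℓ+1} are chosen greedily at the states x_k^{ℓ+1} of a single trajectory starting from the fixed initial state x_0 (u_k^{ℓ+1} ∈ argmin_{u∈U_k(x_k^{ℓ+1})}[g_k(x_k^{ℓ+1},u)+J_{k+1,π^ℓ}(f_k(x_k^{ℓ+1},u))]), and π^{ℓ+1} is any policy that reproduces this trajectory (μ_k^{ℓ+1}(x_k^{ℓ+1}) = u_k^{ℓ+1} for all k). Then J_{π^{ℓ+1}}(x_0) ≤ J_{π^ℓ}(x_0). -/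
open Finset

theorem online_pi_one_step_cost_improvement_at_x0
    {S C : Type} (N : ℕ) (x0 : S)
    (U : ℕ → S → Finset C) (hU : ∀ k x, (U k x).Nonempty)
    (f : ℕ → S → C → S) (g : ℕ → S → C → ℝ) (gN : S → ℝ)
    -- current policy π^ℓ and its cost-to-go functions
    (π : ℕ → S → C) (hπ : ∀ k y, π k y ∈ U k y)
    (J : ℕ → S → ℝ)
    (hJN : ∀ y, J N y = gN y)
    (hJrec : ∀ k, k < N → ∀ y, J k y = g k y (π k y) + J (k + 1) (f k y (π k y)))
    -- the greedily generated trajectory of iteration ℓ+1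
    (x : ℕ → S) (u : ℕ → C)
    (hx0 : x 0 = x0)
    (hmem : ∀ k, k < N → u k ∈ U k (x k))
    (hgreedy : ∀ k, k < N → ∀ v ∈ U k (x k),
      g k (x k) (u k) + J (k + 1) (f k (x k) (u k)) ≤
        g k (x k) v + J (k + 1) (f k (x k) v))
    (hstep : ∀ k, k < N → x (k + 1) = f k (x k) (u k))
    -- new policy π^{ℓ+1} produced by a consistent generator, and its cost-to-go
    (π' : ℕ → S → C) (hπ' : ∀ k y, π' k y ∈ U k y)
    (hcons : ∀ k, k < N → π' k (x k) = u k)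
    (J' : ℕ → S → ℝ)
    (hJ'N : ∀ y, J' N y = gN y)
    (hJ'rec : ∀ k, k < N → ∀ y, J' k y = g k y (π' k y) + J' (k + 1) (f k y (π' k y))) :
    J' 0 x0 ≤ J 0 x0 := by
  have key : ∀ m k, k + m = N → J' k (x k) ≤ J k (x k) := by
    intro m
    induction m with
    | zero =>
      intro k hk
      simp at hk
      subst hk
      rw [hJN, hJ'N]
    | succ m ih =>
      intro k hk
      have hkN : k < N := by omega
      have ih' : J' (k + 1) (x (k + 1)) ≤ J (k + 1) (x (k + 1)) := ih (k + 1) (by omega)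
      rw [hJ'rec k hkN, hJrec k hkN, hcons k hkN]
      rw [← hstep k hkN]
      calc g k (x k) (u k) + J' (k + 1) (x (k + 1))
          ≤ g k (x k) (u k) + J (k + 1) (x (k + 1)) := by linarith
        _ ≤ g k (x k) (π k (x k)) + J (k + 1) (f k (x k) (π k (x k))) := by
            have := hgreedy k hkN (π k (x k)) (hπ k (x k))
            rw [← hstep k hkN] at this; exact this
  have := key N 0 (by omega)
  rwa [hx0] at this
end

section
/- Under the on-line policy iteration algorithm with a consistent generator, the key intermediate inequality holds: for each k = 0, 1, ..., N, the cost-to-go of the new policy at the new trajectory states satisfies J_{k,π^{ℓ+1}}(x_k^{ℓ+1}) ≤ J_{k,π^ℓ}(x_k^{ℓ+1}). -/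
open Finset

theorem online_pi_costtogo_improvement_along_trajectory
    {S C : Type} (N : ℕ) (x0 : S)
    (U : ℕ → S → Finset C) (hU : ∀ k x, (U k x).Nonempty)
    (f : ℕ → S → C → S) (g : ℕ → S → C → ℝ) (gN : S → ℝ)
    (π : ℕ → S → C) (hπ : ∀ k y, π k y ∈ U k y)
    (J : ℕ → S → ℝ)
    (hJN : ∀ y, J N y = gN y)
    (hJrec : ∀ k, k < N → ∀ y, J k y = g k y (π k y) + J (k + 1) (f k y (π k y)))
    (x : ℕ → S) (u : ℕ → C)
    (hx0 : x 0 = x0)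
    (hmem : ∀ k, k < N → u k ∈ U k (x k))
    (hgreedy : ∀ k, k < N → ∀ v ∈ U k (x k),
      g k (x k) (u k) + J (k + 1) (f k (x k) (u k)) ≤
        g k (x k) v + J (k + 1) (f k (x k) v))
    (hstep : ∀ k, k < N → x (k + 1) = f k (x k) (u k))
    (π' : ℕ → S → C) (hπ' : ∀ k y, π' k y ∈ U k y)
    (hcons : ∀ k, k < N → π' k (x k) = u k)
    (J' : ℕ → S → ℝ)
    (hJ'N : ∀ y, J' N y = gN y)
    (hJ'rec : ∀ k, k < N → ∀ y, J' k y = g k y (π' k y) + J' (k + 1) (f k y (π' k y))) :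
    ∀ k, k ≤ N → J' k (x k) ≤ J k (x k) := by
  have key : ∀ m k, k ≤ N → N - k = m → J' k (x k) ≤ J k (x k) := by
    intro m
    induction m with
    | zero =>
      intro k hk hm
      have : k = N := le_antisymm hk (Nat.le_of_sub_eq_zero hm)
      subst this
      rw [hJ'N, hJN]
    | succ m ih =>
      intro k hk hm
      have hkN : k < N := by omega
      have ih' : J' (k+1) (x (k+1)) ≤ J (k+1) (x (k+1)) := ih (k+1) (by omega) (by omega)
      have h1 : J' k (x k) = g k (x k) (u k) + J' (k+1) (x (k+1)) := by
        rw [hJ'rec k hkN, hcons k hkN, hstep k hkN]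
      have h2 : g k (x k) (u k) + J (k+1) (x (k+1)) ≤ J k (x k) := by
        rw [hJrec k hkN, hstep k hkN]
        exact hgreedy k hkN (π k (x k)) (hπ k (x k))
      linarith
  intro k hk
  exact key (N - k) k hk rfl
end

section
/- Under the on-line policy iteration algorithm with a consistent generator, the sequence of costs {J_{π^ℓ}(x_0)} at the fixed initial state is monotonically nonincreasing and bounded below by the optimal cost J*(x_0), hence convergent. -/
open Finset Filter Topology

theorem online_pi_costs_monotone_bounded_convergent
    {S C : Type} [Fintype S] (N : ℕ) (x0 : S)
    (U : ℕ → S → Finset C) (hU : ∀ k x, (U k x).Nonempty)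
    (f : ℕ → S → C → S) (g : ℕ → S → C → ℝ) (gN : S → ℝ)
    -- optimal cost-to-go via DP
    (Jstar : ℕ → S → ℝ)
    (hJsN : ∀ x, Jstar N x = gN x)
    (hJsk : ∀ k, k < N → ∀ x,
      Jstar k x = (U k x).inf' (hU k x) (fun v => g k x v + Jstar (k + 1) (f k x v)))
    -- the sequence of policies and their cost-to-go functions
    (π : ℕ → ℕ → S → C) (J : ℕ → ℕ → S → ℝ)
    (hpol : ∀ ℓ k y, π ℓ k y ∈ U k y)
    (hJN : ∀ ℓ y, J ℓ N y = gN y)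
    (hJrec : ∀ ℓ k, k < N → ∀ y,
      J ℓ k y = g k y (π ℓ k y) + J ℓ (k + 1) (f k y (π ℓ k y)))
    -- the trajectory produced greedily during iteration ℓ+1
    (x : ℕ → ℕ → S) (u : ℕ → ℕ → C)
    (hx0 : ∀ ℓ, x ℓ 0 = x0)
    (hmem : ∀ ℓ k, k < N → u ℓ k ∈ U k (x ℓ k))
    (hgreedy : ∀ ℓ k, k < N → ∀ v ∈ U k (x ℓ k),
      g k (x ℓ k) (u ℓ k) + J ℓ (k + 1) (f k (x ℓ k) (u ℓ k)) ≤
        g k (x ℓ k) v + J ℓ (k + 1) (f k (x ℓ k) v))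
    (hstep : ∀ ℓ k, k < N → x ℓ (k + 1) = f k (x ℓ k) (u ℓ k))
    -- consistency of the generator: the new policy reproduces the trajectory
    (hcons : ∀ ℓ k, k < N → π (ℓ + 1) k (x ℓ k) = u ℓ k) :
    (∀ ℓ, J (ℓ + 1) 0 x0 ≤ J ℓ 0 x0) ∧
    (∀ ℓ, Jstar 0 x0 ≤ J ℓ 0 x0) ∧
    ∃ L : ℝ, Tendsto (fun ℓ => J ℓ 0 x0) atTop (𝓝 L) := by

  have key1 : ∀ ℓ j, j ≤ N → J (ℓ+1) (N - j) (x ℓ (N - j)) ≤ J ℓ (N - j) (x ℓ (N - j)) := by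
    intro ℓ j
    induction j with
    | zero => intro _; simp [hJN]
    | succ j ih =>
      intro hj
      have hk : N - (j+1) < N := by omega
      have hk1 : N - j = N - (j+1) + 1 := by omega
      set k := N - (j+1) with hkdef
      have ihk : J (ℓ+1) (k+1) (x ℓ (k+1)) ≤ J ℓ (k+1) (x ℓ (k+1)) := by
        have := ih (by omega)
        rwa [hk1] at this
      calc J (ℓ+1) k (x ℓ k)
          = g k (x ℓ k) (u ℓ k) + J (ℓ+1) (k+1) (f k (x ℓ k) (u ℓ k)) := by
            rw [hJrec (ℓ+1) k hk, hcons ℓ k hk]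
        _ = g k (x ℓ k) (u ℓ k) + J (ℓ+1) (k+1) (x ℓ (k+1)) := by rw [hstep ℓ k hk]
        _ ≤ g k (x ℓ k) (u ℓ k) + J ℓ (k+1) (x ℓ (k+1)) := by linarith
        _ = g k (x ℓ k) (u ℓ k) + J ℓ (k+1) (f k (x ℓ k) (u ℓ k)) := by rw [hstep ℓ k hk]
        _ ≤ g k (x ℓ k) (π ℓ k (x ℓ k)) + J ℓ (k+1) (f k (x ℓ k) (π ℓ k (x ℓ k))) :=
            hgreedy ℓ k hk _ (hpol ℓ k (x ℓ k))
        _ = J ℓ k (x ℓ k) := (hJrec ℓ k hk (x ℓ k)).symm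
  have key2 : ∀ ℓ j, j ≤ N → ∀ y, Jstar (N - j) y ≤ J ℓ (N - j) y := by
    intro ℓ j
    induction j with
    | zero => intro _ y; simp [hJsN, hJN]
    | succ j ih =>
      intro hj y
      have hk : N - (j+1) < N := by omega
      have hk1 : N - j = N - (j+1) + 1 := by omega
      set k := N - (j+1) with hkdef
      have ihk : ∀ z, Jstar (k+1) z ≤ J ℓ (k+1) z := by
        intro z; have := ih (by omega) z; rwa [hk1] at this
      calc Jstar k y
          ≤ g k y (π ℓ k y) + Jstar (k+1) (f k y (π ℓ k y)) := by
            rw [hJsk k hk y]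
            exact Finset.inf'_le _ (hpol ℓ k y)
        _ ≤ g k y (π ℓ k y) + J ℓ (k+1) (f k y (π ℓ k y)) := by
            have := ihk (f k y (π ℓ k y)); linarith
        _ = J ℓ k y := (hJrec ℓ k hk y).symm
  have h1 : ∀ ℓ, J (ℓ+1) 0 x0 ≤ J ℓ 0 x0 := by
    intro ℓ
    have := key1 ℓ N le_rfl
    simpa [Nat.sub_self, hx0] using this
  have h2 : ∀ ℓ, Jstar 0 x0 ≤ J ℓ 0 x0 := by
    intro ℓ
    have := key2 ℓ N le_rfl x0
    simpa [Nat.sub_self] using this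
  refine ⟨h1, h2, ?_⟩
  have hanti : Antitone (fun ℓ => J ℓ 0 x0) := antitone_nat_of_succ_le h1
  have hbdd : BddBelow (Set.range fun ℓ => J ℓ 0 x0) := by
    refine ⟨Jstar 0 x0, ?_⟩
    rintro r ⟨ℓ, rfl⟩; exact h2 ℓ
  exact ⟨_, tendsto_atTop_ciInf hanti hbdd⟩
end

section
/- In on-line policy iteration with a consistent deterministic generator and the tie-breaking rule (prefer μ_k^ℓ(x_k^{ℓ+1}) in case of a tie in the greedy minimization), if J_{π^{ℓ̄+1}}(x_0) = J_{π^{ℓ̄}}(x_0) for some iteration ℓ̄, then the trajectory is unchanged: u_k^{ℓ̄+1} = u_k^{ℓ̄} and x_{k+1}^{ℓ̄+1} = x_{k+1}^{ℓ̄} for all k = 0,...,N-1, and consequently π^{ℓ̄+1} = π^{ℓ̄} (as outputs of the deterministic generator applied to the same trajectory). -/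
open Finset

theorem online_pi_equal_cost_implies_same_trajectory_and_policy
    {S C : Type} (N : ℕ) (x0 : S)
    (U : ℕ → S → Finset C)
    (f : ℕ → S → C → S) (g : ℕ → S → C → ℝ) (gN : S → ℝ)
    -- deterministic generator mapping trajectories to policies
    (G : (Fin (N + 1) → S) → (Fin N → C) → (ℕ → S → C))
    (hGpol : ∀ xs us k y, G xs us k y ∈ U k y)
    (hGcons : ∀ (xs : Fin (N + 1) → S) (us : Fin N → C),
      (∀ k : Fin N, us k ∈ U k (xs k.castSucc) ∧
        xs k.succ = f k (xs k.castSucc) (us k)) →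
      ∀ k : Fin N, G xs us (k : ℕ) (xs k.castSucc) = us k)
    -- the trajectory produced at iteration ℓ̄, and π^ℓ̄ generated from it
    (xs : Fin (N + 1) → S) (us : Fin N → C)
    (hx0 : xs 0 = x0)
    (hfeas : ∀ k : Fin N, us k ∈ U k (xs k.castSucc) ∧
      xs k.succ = f k (xs k.castSucc) (us k))
    (π : ℕ → S → C) (hπ : π = G xs us)
    (J : ℕ → S → ℝ)
    (hJN : ∀ y, J N y = gN y)
    (hJrec : ∀ k, k < N → ∀ y, J k y = g k y (π k y) + J (k + 1) (f k y (π k y)))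
    -- the greedy trajectory of iteration ℓ̄+1, with ties broken toward π^ℓ̄
    (xs' : Fin (N + 1) → S) (us' : Fin N → C)
    (hx0' : xs' 0 = x0)
    (hmem' : ∀ k : Fin N, us' k ∈ U k (xs' k.castSucc))
    (hstep' : ∀ k : Fin N, xs' k.succ = f k (xs' k.castSucc) (us' k))
    (hgreedy : ∀ k : Fin N, ∀ v ∈ U (k : ℕ) (xs' k.castSucc),
      g k (xs' k.castSucc) (us' k) + J ((k : ℕ) + 1) (f k (xs' k.castSucc) (us' k)) ≤
        g k (xs' k.castSucc) v + J ((k : ℕ) + 1) (f k (xs' k.castSucc) v))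
    (htie : ∀ k : Fin N,
      g k (xs' k.castSucc) (us' k) + J ((k : ℕ) + 1) (f k (xs' k.castSucc) (us' k)) =
        g k (xs' k.castSucc) (π k (xs' k.castSucc)) +
          J ((k : ℕ) + 1) (f k (xs' k.castSucc) (π k (xs' k.castSucc))) →
      us' k = π k (xs' k.castSucc))
    -- the new policy π^{ℓ̄+1} generated from the new trajectory, and its cost-to-go
    (π' : ℕ → S → C) (hπ' : π' = G xs' us')
    (J' : ℕ → S → ℝ)
    (hJ'N : ∀ y, J' N y = gN y)
    (hJ'rec : ∀ k, k < N → ∀ y, J' k y = g k y (π' k y) + J' (k + 1) (f k y (π' k y)))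
    -- equal costs at the fixed initial state
    (heq : J' 0 x0 = J 0 x0) :
    us' = us ∧ xs' = xs ∧ π' = π := by
  subst hπ hπ'
  have hfeas' : ∀ k : Fin N, us' k ∈ U k (xs' k.castSucc) ∧
      xs' k.succ = f k (xs' k.castSucc) (us' k) := fun k => ⟨hmem' k, hstep' k⟩
  have hcons' := hGcons xs' us' hfeas'
  have hcons := hGcons xs us hfeas
  -- key step equalities
  have e1 : ∀ i : Fin N, J' (i : ℕ) (xs' i.castSucc)
      = g i (xs' i.castSucc) (us' i) + J' ((i : ℕ) + 1) (xs' i.succ) := by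
    intro i
    rw [hJ'rec i i.isLt, hcons' i, ← hstep' i]
  have e4 : ∀ i : Fin N, J (i : ℕ) (xs' i.castSucc)
      = g i (xs' i.castSucc) (G xs us i (xs' i.castSucc))
        + J ((i : ℕ) + 1) (f i (xs' i.castSucc) (G xs us i (xs' i.castSucc))) :=
    fun i => hJrec i i.isLt _
  have e3 : ∀ i : Fin N,
      g i (xs' i.castSucc) (us' i) + J ((i : ℕ) + 1) (xs' i.succ)
        ≤ J (i : ℕ) (xs' i.castSucc) := by
    intro i
    rw [e4 i, hstep' i]
    exact hgreedy i _ (hGpol xs us i (xs' i.castSucc))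
  -- Lemma 1: backward induction
  have L1 : ∀ k : Fin (N + 1), J' (k : ℕ) (xs' k) ≤ J (k : ℕ) (xs' k) := by
    intro k
    induction k using Fin.reverseInduction with
    | last => simp [Fin.val_last, hJ'N, hJN]
    | cast i ih =>
      have h2 : J' ((i : ℕ) + 1) (xs' i.succ) ≤ J ((i : ℕ) + 1) (xs' i.succ) := by
        simpa [Fin.val_succ] using ih
      have := e3 i
      have := e1 i
      simp only [Fin.coe_castSucc]
      linarith
  -- Lemma 2: forward induction, equality propagates
  have L2 : ∀ k : Fin (N + 1), J' (k : ℕ) (xs' k) = J (k : ℕ) (xs' k) := by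
    intro k
    induction k using Fin.induction with
    | zero => simpa [hx0'] using heq
    | succ i ih =>
      have h1 := e1 i
      have h3 := e3 i
      have h5 : J' ((i : ℕ) + 1) (xs' i.succ) ≤ J ((i : ℕ) + 1) (xs' i.succ) := by
        simpa [Fin.val_succ] using L1 i.succ
      simp only [Fin.coe_castSucc] at ih
      simp only [Fin.val_succ]
      linarith
  -- tie condition: us' i = π i (xs' i)
  have Ltie : ∀ i : Fin N, us' i = G xs us i (xs' i.castSucc) := by
    intro i
    apply htie i
    have h1 := e1 i
    have hsucc : J' ((i : ℕ) + 1) (xs' i.succ) = J ((i : ℕ) + 1) (xs' i.succ) := by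
      simpa [Fin.val_succ] using L2 i.succ
    have hcs : J' (i : ℕ) (xs' i.castSucc) = J (i : ℕ) (xs' i.castSucc) := by
      simpa [Fin.coe_castSucc] using L2 i.castSucc
    rw [← hstep' i, ← e4 i, ← hcs, h1, hsucc]
  -- trajectories coincide
  have L3 : ∀ k : Fin (N + 1), xs' k = xs k := by
    intro k
    induction k using Fin.induction with
    | zero => rw [hx0', hx0]
    | succ i ih =>
      rw [hstep' i, Ltie i, ih, hcons i, (hfeas i).2]
  have hus : us' = us := by
    funext i
    rw [Ltie i, L3 i.castSucc, hcons i]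
  have hxs : xs' = xs := funext L3
  exact ⟨hus, hxs, by rw [hus, hxs]⟩
end

section
/- Consider simplified on-line policy iteration, in which the greedy minimization at each trajectory state x_k^{ℓ+1} is taken over a subset Ū_k(x_k^{ℓ+1}, μ_k^ℓ) ⊆ U_k(x_k^{ℓ+1}) containing the base policy control μ_k^ℓ(x_k^{ℓ+1}), and the new policy is produced by a consistent generator. Then the policies are improving at the fixed initial state: J_{π^{ℓ+1}}(x_0) ≤ J_{π^ℓ}(x_0) for all ℓ. -/
open Finset

theorem simplified_online_pi_cost_improvement_at_x0
    {S C : Type} (N : ℕ) (x0 : S)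
    (U : ℕ → S → Finset C) (hU : ∀ k x, (U k x).Nonempty)
    (f : ℕ → S → C → S) (g : ℕ → S → C → ℝ) (gN : S → ℝ)
    -- the sequence of policies and their cost-to-go functions
    (π : ℕ → ℕ → S → C) (J : ℕ → ℕ → S → ℝ)
    (hpol : ∀ ℓ k y, π ℓ k y ∈ U k y)
    (hJN : ∀ ℓ y, J ℓ N y = gN y)
    (hJrec : ∀ ℓ k, k < N → ∀ y,
      J ℓ k y = g k y (π ℓ k y) + J ℓ (k + 1) (f k y (π ℓ k y)))
    -- the trajectory of iteration ℓ+1, greedy over the restricted sets Ū_k(x_k^{ℓ+1}, μ_k^ℓ)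
    (x : ℕ → ℕ → S) (u : ℕ → ℕ → C) (Ubar : ℕ → ℕ → Finset C)
    (hx0 : ∀ ℓ, x ℓ 0 = x0)
    (hUbarSub : ∀ ℓ k, k < N → Ubar ℓ k ⊆ U k (x ℓ k))
    (hUbarBase : ∀ ℓ k, k < N → π ℓ k (x ℓ k) ∈ Ubar ℓ k)
    (hmem : ∀ ℓ k, k < N → u ℓ k ∈ Ubar ℓ k)
    (hgreedy : ∀ ℓ k, k < N → ∀ v ∈ Ubar ℓ k,
      g k (x ℓ k) (u ℓ k) + J ℓ (k + 1) (f k (x ℓ k) (u ℓ k)) ≤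
        g k (x ℓ k) v + J ℓ (k + 1) (f k (x ℓ k) v))
    (hstep : ∀ ℓ k, k < N → x ℓ (k + 1) = f k (x ℓ k) (u ℓ k))
    -- consistency of the generator
    (hcons : ∀ ℓ k, k < N → π (ℓ + 1) k (x ℓ k) = u ℓ k) :
    ∀ ℓ, J (ℓ + 1) 0 x0 ≤ J ℓ 0 x0 := by
  intro ℓ
  have key : ∀ m k, k + m = N → J (ℓ + 1) k (x ℓ k) ≤ J ℓ k (x ℓ k) := by
    intro m
    induction m with
    | zero => intro k hk; simp at hk; subst hk; rw [hJN, hJN]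
    | succ m ih =>
      intro k hk
      have hkN : k < N := by omega
      have ih' : J (ℓ + 1) (k + 1) (x ℓ (k + 1)) ≤ J ℓ (k + 1) (x ℓ (k + 1)) :=
        ih (k + 1) (by omega)
      have e1 : J (ℓ + 1) k (x ℓ k)
          = g k (x ℓ k) (u ℓ k) + J (ℓ + 1) (k + 1) (x ℓ (k + 1)) := by
        rw [hJrec (ℓ + 1) k hkN, hcons ℓ k hkN, hstep ℓ k hkN]
      have e2 : J ℓ k (x ℓ k)
          = g k (x ℓ k) (π ℓ k (x ℓ k)) + J ℓ (k + 1) (f k (x ℓ k) (π ℓ k (x ℓ k))) :=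
        hJrec ℓ k hkN _
      have h3 : g k (x ℓ k) (u ℓ k) + J ℓ (k + 1) (f k (x ℓ k) (u ℓ k)) ≤ J ℓ k (x ℓ k) := by
        rw [e2]; exact hgreedy ℓ k hkN _ (hUbarBase ℓ k hkN)
      calc J (ℓ + 1) k (x ℓ k)
          = g k (x ℓ k) (u ℓ k) + J (ℓ + 1) (k + 1) (x ℓ (k + 1)) := e1
        _ ≤ g k (x ℓ k) (u ℓ k) + J ℓ (k + 1) (x ℓ (k + 1)) := by linarith
        _ = g k (x ℓ k) (u ℓ k) + J ℓ (k + 1) (f k (x ℓ k) (u ℓ k)) := by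
            rw [hstep ℓ k hkN]
        _ ≤ J ℓ k (x ℓ k) := h3
  have := key N 0 (by omega)
  rwa [hx0 ℓ] at this
end

section
/- In simplified on-line policy iteration, for each stage k = 0,...,N the cost-to-go along the new trajectory satisfies J_{k,π^{ℓ+1}}(x_k^{ℓ+1}) ≤ J_{k,π^ℓ}(x_k^{ℓ+1}), even though the minimization at each stage is restricted to the subset Ū_k(x_k^{ℓ+1},μ_k^ℓ) of the full control constraint set, as long as this subset contains μ_k^ℓ(x_k^{ℓ+1}). -/
open Finset

theorem simplified_online_pi_costtogo_improvement_along_trajectory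
    {S C : Type} (N : ℕ) (x0 : S)
    (U : ℕ → S → Finset C) (hU : ∀ k x, (U k x).Nonempty)
    (f : ℕ → S → C → S) (g : ℕ → S → C → ℝ) (gN : S → ℝ)
    -- base policy π^ℓ and its cost-to-go
    (π : ℕ → S → C) (hπ : ∀ k y, π k y ∈ U k y)
    (J : ℕ → S → ℝ)
    (hJN : ∀ y, J N y = gN y)
    (hJrec : ∀ k, k < N → ∀ y, J k y = g k y (π k y) + J (k + 1) (f k y (π k y)))
    -- the trajectory, greedy over restricted subsets Ū_k containing the base control
    (x : ℕ → S) (u : ℕ → C) (Ubar : ℕ → Finset C)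
    (hx0 : x 0 = x0)
    (hUbarSub : ∀ k, k < N → Ubar k ⊆ U k (x k))
    (hUbarBase : ∀ k, k < N → π k (x k) ∈ Ubar k)
    (hmem : ∀ k, k < N → u k ∈ Ubar k)
    (hgreedy : ∀ k, k < N → ∀ v ∈ Ubar k,
      g k (x k) (u k) + J (k + 1) (f k (x k) (u k)) ≤
        g k (x k) v + J (k + 1) (f k (x k) v))
    (hstep : ∀ k, k < N → x (k + 1) = f k (x k) (u k))
    -- new policy produced by a consistent generator, and its cost-to-go
    (π' : ℕ → S → C) (hπ' : ∀ k y, π' k y ∈ U k y)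
    (hcons : ∀ k, k < N → π' k (x k) = u k)
    (J' : ℕ → S → ℝ)
    (hJ'N : ∀ y, J' N y = gN y)
    (hJ'rec : ∀ k, k < N → ∀ y, J' k y = g k y (π' k y) + J' (k + 1) (f k y (π' k y))) :
    ∀ k, k ≤ N → J' k (x k) ≤ J k (x k) := by
  have key : ∀ n k, k ≤ N → N - k = n → J' k (x k) ≤ J k (x k) := by
    intro n
    induction n with
    | zero =>
      intro k hk hn
      have : k = N := le_antisymm hk (Nat.sub_eq_zero_iff_le.mp hn)
      subst this
      rw [hJN, hJ'N]
    | succ m ih =>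
      intro k hk hn
      have hkN : k < N := by omega
      have ihk : J' (k+1) (x (k+1)) ≤ J (k+1) (x (k+1)) := ih (k+1) (by omega) (by omega)
      have e1 : J' k (x k) = g k (x k) (u k) + J' (k+1) (x (k+1)) := by
        rw [hJ'rec k hkN, hcons k hkN, hstep k hkN]
      have e2 : x (k+1) = f k (x k) (u k) := hstep k hkN
      have h3 : g k (x k) (u k) + J (k+1) (x (k+1)) ≤ J k (x k) := by
        rw [hJrec k hkN, e2]
        exact hgreedy k hkN _ (hUbarBase k hkN)
      calc J' k (x k) = g k (x k) (u k) + J' (k+1) (x (k+1)) := e1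
        _ ≤ g k (x k) (u k) + J (k+1) (x (k+1)) := by linarith
        _ ≤ J k (x k) := h3
  intro k hk
  exact key (N - k) k hk rfl
end

section
/- Suppose the generated policy in on-line PI satisfies only the weaker tail condition μ_j^{ℓ+1}(x_j^{ℓ+1}) = u_j^{ℓ+1} for j ≥ k (consistency from stage k onward along the new trajectory). Then the cost-to-go inequality J_{j,π^{ℓ+1}}(x_j^{ℓ+1}) ≤ J_{j,π^ℓ}(x_j^{ℓ+1}) holds for all stages j ≥ k. -/
open Finset

theorem online_pi_tail_consistency_suffices
    {S C : Type} (N : ℕ) (x0 : S) (k : ℕ)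
    (U : ℕ → S → Finset C) (hU : ∀ j x, (U j x).Nonempty)
    (f : ℕ → S → C → S) (g : ℕ → S → C → ℝ) (gN : S → ℝ)
    -- base policy π^ℓ and its cost-to-go
    (π : ℕ → S → C) (hπ : ∀ j y, π j y ∈ U j y)
    (J : ℕ → S → ℝ)
    (hJN : ∀ y, J N y = gN y)
    (hJrec : ∀ j, j < N → ∀ y, J j y = g j y (π j y) + J (j + 1) (f j y (π j y)))
    -- the greedy trajectory of iteration ℓ+1
    (x : ℕ → S) (u : ℕ → C)
    (hx0 : x 0 = x0)
    (hmem : ∀ j, j < N → u j ∈ U j (x j))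
    (hgreedy : ∀ j, j < N → ∀ v ∈ U j (x j),
      g j (x j) (u j) + J (j + 1) (f j (x j) (u j)) ≤
        g j (x j) v + J (j + 1) (f j (x j) v))
    (hstep : ∀ j, j < N → x (j + 1) = f j (x j) (u j))
    -- new policy, consistent only from stage k onward along the new trajectory
    (π' : ℕ → S → C) (hπ' : ∀ j y, π' j y ∈ U j y)
    (hconsTail : ∀ j, k ≤ j → j < N → π' j (x j) = u j)
    (J' : ℕ → S → ℝ)
    (hJ'N : ∀ y, J' N y = gN y)
    (hJ'rec : ∀ j, j < N → ∀ y, J' j y = g j y (π' j y) + J' (j + 1) (f j y (π' j y))) :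
    ∀ j, k ≤ j → j ≤ N → J' j (x j) ≤ J j (x j) := by
  have key : ∀ d j, j + d = N → k ≤ j → J' j (x j) ≤ J j (x j) := by
    intro d
    induction d with
    | zero =>
      intro j hj _
      simp only [Nat.add_zero] at hj
      subst hj
      rw [hJ'N, hJN]
    | succ d ih =>
      intro j hj hk
      have hjN : j < N := by omega
      have h1 : J' j (x j) = g j (x j) (u j) + J' (j + 1) (x (j + 1)) := by
        rw [hJ'rec j hjN, hconsTail j hk hjN, hstep j hjN]
      have h2 : J' (j + 1) (x (j + 1)) ≤ J (j + 1) (x (j + 1)) := ih (j + 1) (by omega) (by omega)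
      have h3 : g j (x j) (u j) + J (j + 1) (x (j + 1)) ≤ J j (x j) := by
        rw [hJrec j hjN, hstep j hjN]
        exact hgreedy j hjN (π j (x j)) (hπ j (x j))
      linarith
  intro j hk hle
  exact key (N - j) j (by omega) hk
end
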